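/- Let H be a real Hilbert space, A_1,...,A_q bounded linear operators on H, h_0 ∈ H, and for controls u ∈ ℝ^{q×T} let (h_t) solve Δh_{t+1} = A[u_t] h_t with A[u] = ∑_i u_i A_i. Let F : H → ℝ and L_t : H × ℝ^q → ℝ be Fréchet differentiable, and define E(u) = F(h_T) + ∑_{t=0}^{T-1} L_t(h_t, u_t). Let (h*_t) solve the backward adjoint equation Δh*_{t+1} = -A*[u_t] h*_{t+1} - D_1 L_t(h_t, u_t) with terminal condition h*_T = DF(h_T), where A*[u] = ∑_i u_i A_i* and DF(h_T), D_1 L_t denote Riesz representers of the Fréchet derivatives. Then the partial derivative of E with respect to u_{i,t} is ⟨h*_{t+1}, A_i h_t⟩_H + D_{2,i} L_t(h_t, u_t). -/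

import Mathlib

open scoped RealInnerProductSpace

private def auxSeq {H : Type*} [Zero H] (f : ℕ → H → H) : ℕ → H
  | 0 => 0
  | s + 1 => f s (auxSeq f s)

/-- Gradient of the total cost with respect to the controls: with forward solution `sol u`,
adjoint response `hstar`, terminal cost `F` (gradient `DF`) and running costs `L t`
(partial gradients `D1L`, `D2L`), the partial derivative of
`E u = F (sol u T) + ∑ t, L t (sol u t) (u t)` with respect to `u t i` is
`⟪hstar (t+1), A i (sol u t)⟫ + D2L t (sol u t) (u t) i`. -/
theorem stmt_3 {H : Type*} [NormedAddCommGroup H] [InnerProductSpace ℝ H] [CompleteSpace H]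
    {q T : ℕ}
    (A : Fin q → H →L[ℝ] H) (h₀ : H)
    (sol : (Fin T → EuclideanSpace ℝ (Fin q)) → ℕ → H)
    (hsol0 : ∀ u, sol u 0 = h₀)
    (hsolstep : ∀ u (t : Fin T),
      sol u ((t : ℕ) + 1) - sol u t = (∑ i, u t i • A i) (sol u t))
    (F : H → ℝ) (DF : H → H) (hF : ∀ h, HasGradientAt F (DF h) h)
    (L : Fin T → H → EuclideanSpace ℝ (Fin q) → ℝ)
    (D1L : Fin T → H → EuclideanSpace ℝ (Fin q) → H)
    (D2L : Fin T → H → EuclideanSpace ℝ (Fin q) → EuclideanSpace ℝ (Fin q))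
    (hL : ∀ (t : Fin T) (p : H × EuclideanSpace ℝ (Fin q)),
      HasFDerivAt (fun p : H × EuclideanSpace ℝ (Fin q) => L t p.1 p.2)
        ((innerSL ℝ (D1L t p.1 p.2)).comp (ContinuousLinearMap.fst ℝ H (EuclideanSpace ℝ (Fin q)))
          + (innerSL ℝ (D2L t p.1 p.2)).comp
              (ContinuousLinearMap.snd ℝ H (EuclideanSpace ℝ (Fin q)))) p)
    (E : (Fin T → EuclideanSpace ℝ (Fin q)) → ℝ)
    (hE : ∀ u, E u = F (sol u T) + ∑ t : Fin T, L t (sol u t) (u t))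
    (u : Fin T → EuclideanSpace ℝ (Fin q))
    (hstar : ℕ → H)
    (hstarT : hstar T = DF (sol u T))
    (hstarstep : ∀ t : Fin T,
      hstar ((t : ℕ) + 1) - hstar t
        = -(∑ i, u t i • (ContinuousLinearMap.adjoint (A i))) (hstar ((t : ℕ) + 1))
          - D1L t (sol u t) (u t)) :
    ∀ (t : Fin T) (i : Fin q),
      HasDerivAt (fun r : ℝ => E (Function.update u t (WithLp.toLp 2 (Function.update (u t) i r))))
        (⟪hstar ((t : ℕ) + 1), (A i) (sol u t)⟫ + D2L t (sol u t) (u t) i)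
        (u t i) := by
  intro t i
  set r0 := u t i with hr0
  set v : ℝ → (Fin T → EuclideanSpace ℝ (Fin q)) :=
    fun r => Function.update u t (WithLp.toLp 2 (Function.update (u t) i r)) with hvdef
  -- basic facts about v
  have hv_ne : ∀ (r : ℝ) (s : Fin T), s ≠ t → v r s = u s := by
    intro r s hs; simp [hvdef, Function.update_of_ne hs]
  have hv_t : ∀ r : ℝ, v r t = Function.update (u t) i r := by
    intro r; simp [hvdef]
  have hv0 : v r0 = u := by
    funext s
    by_cases hs : s = t
    · subst hs; simp [hvdef, hr0]
    · exact hv_ne r0 s hs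
  -- step recursion in convenient form
  have hstep : ∀ (w : Fin T → EuclideanSpace ℝ (Fin q)) (s : ℕ) (hs : s < T),
      sol w (s + 1) = sol w s + (∑ j, w ⟨s, hs⟩ j • A j) (sol w s) := by
    intro w s hs
    have h := hsolstep w ⟨s, hs⟩
    rw [sub_eq_iff_eq_add'] at h
    exact h
  -- sol doesn't change below t
  have hsol_le : ∀ (r : ℝ) (s : ℕ), s ≤ (t : ℕ) → sol (v r) s = sol u s := by
    intro r s
    induction s with
    | zero => intro _; rw [hsol0, hsol0]
    | succ s ih =>
      intro hs
      have hst : s < (t : ℕ) := hs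
      have hsT : s < T := lt_trans hst t.isLt
      rw [hstep (v r) s hsT, hstep u s hsT, ih (le_of_lt hst),
        hv_ne r ⟨s, hsT⟩ (Fin.ne_of_val_ne (Nat.ne_of_lt hst))]
  -- the operator B
  set B : ℕ → H →L[ℝ] H := fun s =>
    if hs : s < T then ∑ j, u ⟨s, hs⟩ j • A j else 0 with hBdef
  -- the variation sequence δ
  set δ : ℕ → H := auxSeq (fun s ih =>
    if s < (t : ℕ) then 0 else if s = (t : ℕ) then (A i) (sol u t) else ih + B s ih) with hδdef
  have hδle : ∀ s : ℕ, s ≤ (t : ℕ) → δ s = 0 := by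
    intro s hs
    match s with
    | 0 => rfl
    | s + 1 =>
      have : s < (t : ℕ) := hs
      simp [hδdef, auxSeq, this]
  have hδt1 : δ ((t : ℕ) + 1) = (A i) (sol u t) := by
    simp [hδdef, auxSeq]
  have hδsucc : ∀ s : ℕ, (t : ℕ) < s → δ (s + 1) = δ s + B s (δ s) := by
    intro s hs
    show auxSeq _ (s+1) = _
    rw [auxSeq, if_neg (by omega), if_neg (by omega)]
  -- derivative of forward solution
  have hDeriv : ∀ s : ℕ, s ≤ T → HasDerivAt (fun r : ℝ => sol (v r) s) (δ s) r0 := by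
    intro s
    induction s with
    | zero =>
      intro _
      have h1 : (fun r : ℝ => sol (v r) 0) = fun _ => h₀ := funext fun r => hsol0 (v r)
      rw [h1, hδle 0 (Nat.zero_le _)]
      exact hasDerivAt_const _ _
    | succ s ih =>
      intro hsT'
      have hsT : s < T := hsT'
      rcases lt_trichotomy s (t : ℕ) with hlt | heq | hgt
      · have h1 : (fun r : ℝ => sol (v r) (s + 1)) = fun _ => sol u (s + 1) :=
          funext fun r => hsol_le r (s + 1) hlt
        rw [h1, hδle (s + 1) hlt]
        exact hasDerivAt_const _ _
      · have hfun : ∀ r : ℝ, sol (v r) (s + 1)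
            = sol u s + ∑ j, Function.update (u t) i r j • (A j) (sol u s) := by
          intro r
          rw [hstep (v r) s hsT, hsol_le r s (le_of_eq heq)]
          congr 1
          have hst : (⟨s, hsT⟩ : Fin T) = t := Fin.ext heq
          rw [hst, hv_t r]
          simp [ContinuousLinearMap.sum_apply]
        have hδs : δ (s + 1) = (A i) (sol u s) := by rw [heq]; exact hδt1
        rw [funext hfun, hδs]
        have hsum : HasDerivAt
            (fun r : ℝ => ∑ j, Function.update (u t) i r j • (A j) (sol u s))
            ((A i) (sol u s)) r0 := by
          have hterm : ∀ j : Fin q, HasDerivAt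
              (fun r : ℝ => Function.update (u t) i r j • (A j) (sol u s))
              (if j = i then (A i) (sol u s) else 0) r0 := by
            intro j
            by_cases hj : j = i
            · subst hj
              simp only [Function.update_self, if_pos rfl]
              simpa using (hasDerivAt_id r0).smul_const ((A j) (sol u s))
            · simp only [Function.update_of_ne hj, if_neg hj]
              exact hasDerivAt_const _ _
          have h2 := HasDerivAt.fun_sum (fun j (_ : j ∈ Finset.univ) => hterm j)
          simpa using h2
        exact HasDerivAt.const_add (sol u s) hsum
      · have hfun : ∀ r : ℝ, sol (v r) (s + 1) = sol (v r) s + B s (sol (v r) s) := by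
          intro r
          rw [hstep (v r) s hsT, hv_ne r ⟨s, hsT⟩ (Fin.ne_of_val_ne (Nat.ne_of_gt hgt))]
          congr 1
          rw [hBdef]
          simp only [dif_pos hsT]
        rw [funext hfun, hδsucc s hgt]
        exact (ih hsT.le).add ((B s).hasFDerivAt.comp_hasDerivAt r0 (ih hsT.le))
  -- adjoint pairing
  have hadj : ∀ (s : ℕ) (hs : s < T) (x y : H),
      ⟪(∑ j, u ⟨s, hs⟩ j • ContinuousLinearMap.adjoint (A j)) x, y⟫
        = ⟪x, (∑ j, u ⟨s, hs⟩ j • A j) y⟫ := by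
    intro s hs x y
    simp [ContinuousLinearMap.sum_apply, ContinuousLinearMap.smul_apply, sum_inner, inner_sum,
      real_inner_smul_left, real_inner_smul_right, ContinuousLinearMap.adjoint_inner_left]
  have hstar_eq : ∀ (s : ℕ) (hs : s < T),
      hstar s = hstar (s + 1)
        + (∑ j, u ⟨s, hs⟩ j • ContinuousLinearMap.adjoint (A j)) (hstar (s + 1))
        + D1L ⟨s, hs⟩ (sol u s) (u ⟨s, hs⟩) := by
    intro s hs
    have h := hstarstep ⟨s, hs⟩
    have h2 : hstar s = hstar (s + 1) - (hstar (s + 1) - hstar s) := by abel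
    rw [h] at h2
    rw [h2]
    abel
  -- running cost contributions
  set g : ℕ → ℝ := fun s =>
    if hs : s < T then ⟪D1L ⟨s, hs⟩ (sol u s) (u ⟨s, hs⟩), δ s⟫ else 0 with hgdef
  -- the key adjoint identity
  have key : ∀ s : ℕ, (t : ℕ) + 1 ≤ s → s ≤ T →
      ⟪hstar s, δ s⟫ + ∑ s' ∈ Finset.Ico ((t : ℕ) + 1) s, g s'
        = ⟪hstar ((t : ℕ) + 1), (A i) (sol u t)⟫ := by
    intro s hs
    induction s, hs using Nat.le_induction with
    | base =>
      intro _
      simp [hδt1]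
    | succ s hs IH =>
      intro hs1
      have hsT : s < T := hs1
      rw [Finset.sum_Ico_succ_top hs]
      have h1 : ⟪hstar (s + 1), δ (s + 1)⟫ = ⟪hstar s, δ s⟫ - g s := by
        have hBs : B s = ∑ j, u ⟨s, hsT⟩ j • A j := by rw [hBdef]; exact dif_pos hsT
        rw [hδsucc s (by omega), hBs, inner_add_right, ← hadj s hsT, hstar_eq s hsT]
        simp only [hgdef, dif_pos hsT, inner_add_left]
        ring
      rw [h1]
      have := IH hsT.le
      linarith
  -- derivative of the terminal cost term
  have hFder : HasDerivAt (fun r : ℝ => F (sol (v r) T)) ⟪DF (sol u T), δ T⟫ r0 := by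
    have h1 := (hF (sol u T)).hasFDerivAt
    have hpt : sol (v r0) T = sol u T := by rw [hv0]
    rw [← hpt] at h1
    have h2 := h1.comp_hasDerivAt r0 (hDeriv T le_rfl)
    simp only [InnerProductSpace.toDual_apply_apply, hpt] at h2
    exact h2
  -- derivative of each running cost term
  have hLder : ∀ s : Fin T, HasDerivAt (fun r : ℝ => L s (sol (v r) s) (v r s))
      (g s + if s = t then D2L t (sol u t) (u t) i else 0) r0 := by
    intro s
    have hw' : HasDerivAt (fun r : ℝ => v r s)
        (if s = t then EuclideanSpace.single i (1 : ℝ) else 0) r0 := by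
      by_cases hst : s = t
      · subst hst
        simp only [if_pos rfl]
        have hrep : ∀ r : ℝ, v r s = u s + (r - r0) • EuclideanSpace.single i (1 : ℝ) := by
          intro r
          ext j
          rw [hv_t r]
          by_cases hj : j = i
          · subst hj
            simp [EuclideanSpace.single_apply, hr0]
          · simp [Function.update_of_ne hj, EuclideanSpace.single_apply, hj]
        rw [funext hrep]
        simpa using (((hasDerivAt_id r0).sub_const r0).smul_const
          (EuclideanSpace.single i (1 : ℝ))).const_add (u s)
      · simp only [if_neg hst]
        have h1 : (fun r : ℝ => v r s) = fun _ => u s := funext fun r => hv_ne r s hst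
        rw [h1]
        exact hasDerivAt_const _ _
    have hpair : HasDerivAt (fun r : ℝ => ((sol (v r) s, v r s) : H × EuclideanSpace ℝ (Fin q)))
        (δ s, if s = t then EuclideanSpace.single i (1 : ℝ) else 0) r0 :=
      (hDeriv s s.isLt.le).prodMk hw'
    have hfd := hL s (sol (v r0) s, v r0 s)
    have h2 := hfd.comp_hasDerivAt r0 hpair
    simp only [hv0] at h2
    have hval : ((innerSL ℝ (D1L s (sol u s) (u s))).comp
          (ContinuousLinearMap.fst ℝ H (EuclideanSpace ℝ (Fin q)))
        + (innerSL ℝ (D2L s (sol u s) (u s))).comp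
            (ContinuousLinearMap.snd ℝ H (EuclideanSpace ℝ (Fin q))))
          ((δ s, if s = t then EuclideanSpace.single i (1 : ℝ) else 0)
            : H × EuclideanSpace ℝ (Fin q))
        = g s + if s = t then D2L t (sol u t) (u t) i else 0 := by
      simp only [ContinuousLinearMap.add_apply, ContinuousLinearMap.coe_comp', Function.comp,
        ContinuousLinearMap.coe_fst', ContinuousLinearMap.coe_snd', innerSL_apply_apply]
      congr 1
      · rw [hgdef]; simp only [dif_pos s.isLt, Fin.eta]
      · by_cases hst : s = t
        · subst hst
          simp [EuclideanSpace.inner_single_right, real_inner_comm]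
        · simp [hst]
    have hfun : (fun r : ℝ => L s (sol (v r) s) (v r s))
        = (fun p : H × EuclideanSpace ℝ (Fin q) => L s p.1 p.2)
            ∘ (fun r : ℝ => ((sol (v r) s, v r s) : H × EuclideanSpace ℝ (Fin q))) := rfl
    rw [hfun, ← hval]
    convert h2 using 2
  -- assemble
  have hEfun : (fun r : ℝ => E (v r))
      = fun r : ℝ => F (sol (v r) T) + ∑ s : Fin T, L s (sol (v r) s) (v r s) :=
    funext fun r => hE (v r)
  have htotal : HasDerivAt (fun r : ℝ => E (v r))
      (⟪DF (sol u T), δ T⟫ + ∑ s : Fin T, (g s + if s = t then D2L t (sol u t) (u t) i else 0))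
      r0 := by
    rw [hEfun]
    exact hFder.add (HasDerivAt.fun_sum fun s _ => hLder s)
  have hT1 : (t : ℕ) + 1 ≤ T := t.isLt
  have hval : ⟪DF (sol u T), δ T⟫
      + ∑ s : Fin T, (g s + if s = t then D2L t (sol u t) (u t) i else 0)
      = ⟪hstar ((t : ℕ) + 1), (A i) (sol u t)⟫ + D2L t (sol u t) (u t) i := by
    have h1 : ∑ s : Fin T, (g s + if s = t then D2L t (sol u t) (u t) i else 0)
        = (∑ s : Fin T, g (s : ℕ)) + D2L t (sol u t) (u t) i := by
      rw [Finset.sum_add_distrib]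
      congr 1
      simp [Finset.sum_ite_eq']
    have h2 : ∑ s : Fin T, g (s : ℕ) = ∑ s' ∈ Finset.Ico ((t : ℕ) + 1) T, g s' := by
      rw [Fin.sum_univ_eq_sum_range, Finset.range_eq_Ico,
        ← Finset.sum_Ico_consecutive g (Nat.zero_le ((t : ℕ) + 1)) hT1]
      have hzero : ∑ s' ∈ Finset.Ico 0 ((t : ℕ) + 1), g s' = 0 := by
        apply Finset.sum_eq_zero
        intro s' hs'
        have hs't : s' ≤ (t : ℕ) := by
          simp only [Finset.mem_Ico] at hs'; omega
        rw [hgdef]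
        by_cases hsT : s' < T
        · simp only [dif_pos hsT, hδle s' hs't, inner_zero_right]
        · simp only [dif_neg hsT]
      rw [hzero, zero_add]
    have h3 := key T hT1 le_rfl
    rw [hstarT] at h3
    rw [h1, h2]
    linarith
  rw [hval] at htotal
  exact htotal
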